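/- arXiv:2506.09017 — 9 statements merged into one kernel-verified Lean document; each statement's English description precedes it below -/
import Mathlib

section
/- Let p be a prime, n, m ≥ 1, and let f ∈ (ZMod (p^n))[X] be a monic polynomial of degree m whose image under coefficient-wise reduction modulo p is irreducible in (ZMod p)[X]. Then the quotient ring GR(p^n,m) := (ZMod (p^n))[X] ⧸ (ideal generated by f) is a local ring, and its maximal ideal is the ideal generated by (the image of) p. -/
/-!
Modulo `p`, the ring `AdjoinRoot f` becomes `(ZMod p)[X] ⧸ (f mod p)`, a field because `f mod p`
is irreducible; so `(p)` is a maximal ideal. Since `p ^ n = 0`, every prime ideal contains `p`,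
hence `(p)` is the only maximal ideal.
-/

open Polynomial

theorem IsLocalRing.of_isMaximal_of_le_nilradical {R : Type*} [CommRing R] {I : Ideal R}
    (hI : I.IsMaximal) (hnil : I ≤ nilradical R) : IsLocalRing R :=
  .of_unique_max_ideal ⟨I, hI, fun J hJ ↦
    (hI.eq_of_le hJ.ne_top (hnil.trans (nilradical_le_prime J))).symm⟩

theorem ZMod.ker_castHom {m n : ℕ} (h : m ∣ n) :
    RingHom.ker (ZMod.castHom h (ZMod m)) = Ideal.span {(m : ZMod n)} := by
  ext x
  obtain ⟨k, rfl⟩ := ZMod.intCast_surjective x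
  rw [RingHom.mem_ker, map_intCast, ZMod.intCast_zmod_eq_zero_iff_dvd,
    Ideal.mem_span_singleton]
  constructor
  · rintro ⟨j, rfl⟩
    exact ⟨j, by push_cast; rfl⟩
  · rintro ⟨y, hy⟩
    rw [← ZMod.intCast_zmod_eq_zero_iff_dvd, ← map_intCast (ZMod.castHom h (ZMod m)), hy,
      map_mul, map_natCast, ZMod.natCast_self, zero_mul]

theorem AdjoinRoot.isMaximal_map_ker_of_irreducible {R K : Type*} [CommRing R] [Field K]
    {c : R →+* K} (hc : Function.Surjective c) {f : R[X]} (hf : Irreducible (f.map c)) :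
    ((RingHom.ker c).map (AdjoinRoot.of f)).IsMaximal := by
  let e := RingHom.quotientKerEquivOfSurjective hc
  have hmap : (f.map (Ideal.Quotient.mk (RingHom.ker c))).map (e : _ →+* K) = f.map c := by
    rw [Polynomial.map_map]
    rfl
  let E := (quotAdjoinRootEquivQuotPolynomialQuot (RingHom.ker c) f).trans
    (Ideal.quotientEquiv _ (Ideal.span {f.map c}) (Polynomial.mapEquiv e)
      (by rw [Ideal.map_span, Set.image_singleton, RingEquiv.coe_toRingHom, mapEquiv_apply,
        hmap]))
  have hK : (Ideal.span {f.map c}).IsMaximal := PrincipalIdealRing.isMaximal_of_irreducible hf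
  rw [Ideal.Quotient.maximal_ideal_iff_isField_quotient] at hK ⊢
  exact E.toMulEquiv.isField hK

theorem galois_ring_isLocalRing_general (p n : ℕ) (hp : p.Prime) (hn : 0 < n)
    (f : Polynomial (ZMod (p ^ n)))
    (hirr : Irreducible (f.map (ZMod.castHom (dvd_pow_self p hn.ne') (ZMod p)))) :
    ∃ _ : IsLocalRing (AdjoinRoot f),
      IsLocalRing.maximalIdeal (AdjoinRoot f) = Ideal.span {(p : AdjoinRoot f)} := by
  have : Fact p.Prime := ⟨hp⟩
  have hmax : (Ideal.span {(p : AdjoinRoot f)}).IsMaximal := by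
    have := AdjoinRoot.isMaximal_map_ker_of_irreducible (ZMod.castHom_surjective _) hirr
    rwa [ZMod.ker_castHom, Ideal.map_span, Set.image_singleton, map_natCast] at this
  have hpow : (p : AdjoinRoot f) ^ n = 0 := by
    rw [← Nat.cast_pow, ← map_natCast (AdjoinRoot.of f), ZMod.natCast_self, map_zero]
  have hle : Ideal.span {(p : AdjoinRoot f)} ≤ nilradical (AdjoinRoot f) :=
    (Ideal.span_singleton_le_iff_mem _).2 (mem_nilradical.2 ⟨n, hpow⟩)
  let hloc := IsLocalRing.of_isMaximal_of_le_nilradical hmax hle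
  exact ⟨hloc, (IsLocalRing.eq_maximalIdeal hmax).symm⟩

/-- The Galois ring `GR(p^n, m) = (ZMod (p^n))[X] ⧸ (f)`, for `f` a monic
basic irreducible polynomial of degree `m`, is a local ring whose maximal ideal is
generated by `p`. -/
theorem galois_ring_isLocalRing (p n m : ℕ) (hp : p.Prime) (hn : 0 < n) (hm : 0 < m)
    (f : Polynomial (ZMod (p ^ n))) (hf : f.Monic) (hdeg : f.natDegree = m)
    (hirr : Irreducible (f.map (ZMod.castHom (dvd_pow_self p hn.ne') (ZMod p)))) :
    ∃ _ : IsLocalRing (AdjoinRoot f),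
      IsLocalRing.maximalIdeal (AdjoinRoot f) = Ideal.span {(p : AdjoinRoot f)} :=
  galois_ring_isLocalRing_general p n hp hn f hirr
end

section
/- Let p be a prime, n, m ≥ 1, and GR(p^n,m) = (ZMod (p^n))[X]/(f) for a monic basic irreducible f of degree m. Then the quotient ring GR(p^n,m) ⧸ (ideal generated by p) is a finite field with exactly p^m elements. -/
/-!
Reduction modulo `p` is a surjection `ZMod (p ^ n) → ZMod p` with kernel `(p)`, and adjoining a
root commutes with passing to a quotient of the coefficients. Hence `GR(p^n, m) ⧸ (p)` is
`(ZMod p)[X] ⧸ (f mod p)`, a field because `f mod p` is irreducible, and a `ZMod p`-vector space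
of dimension `deg (f mod p) = m` because `f` is monic.
-/

open Polynomial

noncomputable def AdjoinRoot.quotientMapKerEquiv {R S : Type*} [CommRing R] [CommRing S]
    {φ : R →+* S} (hφ : Function.Surjective φ) (f : R[X]) :
    AdjoinRoot f ⧸ (RingHom.ker φ).map (AdjoinRoot.of f) ≃+* AdjoinRoot (f.map φ) :=
  (AdjoinRoot.quotEquivQuotMap f (RingHom.ker φ)).toRingEquiv.trans <|
    Ideal.quotientEquiv _ _ (mapEquiv (RingHom.quotientKerEquivOfSurjective hφ)) <| by
      rw [Ideal.map_span, Set.image_singleton]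
      congr 2
      exact (Polynomial.map_map (Ideal.Quotient.mk (RingHom.ker φ))
        (RingHom.quotientKerEquivOfSurjective hφ : _ →+* S) f).symm

theorem Polynomial.Monic.natCard_adjoinRoot {R : Type*} [CommRing R] {g : R[X]} (hg : g.Monic) :
    Nat.card (AdjoinRoot g) = Nat.card R ^ g.natDegree := by
  rw [Nat.card_congr (AdjoinRoot.powerBasis' hg).basis.equivFun.toEquiv, Nat.card_fun,
    Nat.card_fin, AdjoinRoot.powerBasis'_dim]

theorem galois_ring_residue_field_general (p n m : ℕ) (hp : p.Prime) (hn : 0 < n)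
    (f : Polynomial (ZMod (p ^ n))) (hf : f.Monic) (hdeg : f.natDegree = m)
    (hirr : Irreducible (f.map (ZMod.castHom (dvd_pow_self p hn.ne') (ZMod p)))) :
    IsField (AdjoinRoot f ⧸ Ideal.span {(p : AdjoinRoot f)}) ∧
      Nat.card (AdjoinRoot f ⧸ Ideal.span {(p : AdjoinRoot f)}) = p ^ m := by
  have : Fact p.Prime := ⟨hp⟩
  set φ := ZMod.castHom (dvd_pow_self p hn.ne') (ZMod p)
  have : Fact (Irreducible (f.map φ)) := ⟨hirr⟩
  have hspan : Ideal.span {(p : AdjoinRoot f)} = (RingHom.ker φ).map (AdjoinRoot.of f) := by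
    rw [ZMod.ker_castHom, Ideal.map_span, Set.image_singleton, map_natCast]
  let e := (Ideal.quotEquivOfEq hspan).trans
    (AdjoinRoot.quotientMapKerEquiv (ZMod.castHom_surjective _) f)
  refine ⟨e.toMulEquiv.isField (Field.toIsField _), ?_⟩
  rw [Nat.card_congr e.toEquiv, (hf.map φ).natCard_adjoinRoot, Nat.card_zmod,
    hf.natDegree_map, hdeg]

/-- For the Galois ring `GR(p^n, m) = (ZMod (p^n))[X] ⧸ (f)`, with `f` monic
basic irreducible of degree `m`, the quotient by the ideal generated by `p` is a finite field
with exactly `p ^ m` elements. -/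
theorem galois_ring_residue_field (p n m : ℕ) (hp : p.Prime) (hn : 0 < n) (hm : 0 < m)
    (f : Polynomial (ZMod (p ^ n))) (hf : f.Monic) (hdeg : f.natDegree = m)
    (hirr : Irreducible (f.map (ZMod.castHom (dvd_pow_self p hn.ne') (ZMod p)))) :
    IsField (AdjoinRoot f ⧸ Ideal.span {(p : AdjoinRoot f)}) ∧
      Nat.card (AdjoinRoot f ⧸ Ideal.span {(p : AdjoinRoot f)}) = p ^ m :=
  galois_ring_residue_field_general p n m hp hn f hf hdeg hirr
end

section
/- Let p be a prime, n, m ≥ 1, and GR(p^n,m) = (ZMod (p^n))[X]/(f) for a monic basic irreducible f of degree m. Then every ideal of GR(p^n,m) equals the ideal generated by p^i for some 0 ≤ i ≤ n; in particular, the ideals of GR(p^n,m) form a chain, totally ordered by inclusion, GR(p^n,m) ⊇ (p) ⊇ (p^2) ⊇ ⋯ ⊇ (p^n) = 0. -/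
/-- Every ideal of the Galois ring `GR(p^n, m)` is generated by `p ^ i` for
some `0 ≤ i ≤ n`; in particular the ideals form a chain totally ordered by inclusion,
ending with `(p ^ n) = 0`. -/
theorem galois_ring_ideals_chain (p n m : ℕ) (hp : p.Prime) (hn : 0 < n) (hm : 0 < m)
    (f : Polynomial (ZMod (p ^ n))) (hf : f.Monic) (hdeg : f.natDegree = m)
    (hirr : Irreducible (f.map (ZMod.castHom (dvd_pow_self p hn.ne') (ZMod p)))) :
    (∀ I : Ideal (AdjoinRoot f), ∃ i ≤ n, I = Ideal.span {(p : AdjoinRoot f) ^ i}) ∧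
    (∀ I J : Ideal (AdjoinRoot f), I ≤ J ∨ J ≤ I) ∧
    Ideal.span {(p : AdjoinRoot f) ^ n} = (⊥ : Ideal (AdjoinRoot f)) := by
  classical
  haveI : Fact p.Prime := ⟨hp⟩
  haveI : NeZero (p ^ n) := ⟨pow_ne_zero n hp.ne_zero⟩
  set g : ZMod (p ^ n) →+* ZMod p := ZMod.castHom (dvd_pow_self p hn.ne') (ZMod p) with hg
  -- p^n = 0 in the Galois ring
  have hpn : (p : AdjoinRoot f) ^ n = 0 := by
    have : ((p ^ n : ℕ) : AdjoinRoot f) = 0 := by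
      rw [← map_natCast (algebraMap (ZMod (p ^ n)) (AdjoinRoot f)), ZMod.natCast_self, map_zero]
    push_cast at this
    exact this
  -- the residue field
  haveI : Fact (Irreducible (f.map g)) := ⟨hirr⟩
  -- surjectivity of g
  have gsurj : Function.Surjective g := by
    intro b
    exact ⟨(b.val : ZMod (p ^ n)), by rw [hg, map_natCast, ZMod.natCast_rightInverse b]⟩
  -- kernel of g
  have hkerg : ∀ x : ZMod (p ^ n), g x = 0 ↔ (p : ZMod (p ^ n)) ∣ x := by
    intro x
    obtain ⟨k, rfl⟩ := ZMod.natCast_rightInverse.surjective x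
    rw [map_natCast, ZMod.natCast_eq_zero_iff]
    constructor
    · rintro ⟨c, rfl⟩; exact ⟨(c : ZMod (p ^ n)), by push_cast; ring⟩
    · rintro ⟨c, hc⟩
      have h2 : g ((k : ZMod (p ^ n))) = 0 := by
        rw [hc, map_mul, map_natCast, ZMod.natCast_self, zero_mul]
      rw [map_natCast] at h2
      exact (ZMod.natCast_eq_zero_iff k p).mp h2
  -- the reduction homomorphism to the residue field
  have hfmap : Polynomial.eval₂ ((AdjoinRoot.of (f.map g)).comp g)
      (AdjoinRoot.root (f.map g)) f = 0 := by
    rw [← Polynomial.eval₂_map, AdjoinRoot.eval₂_root]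
  set φ : AdjoinRoot f →+* AdjoinRoot (f.map g) :=
    AdjoinRoot.lift ((AdjoinRoot.of (f.map g)).comp g) (AdjoinRoot.root (f.map g)) hfmap with hφ
  have hφmk : ∀ a : Polynomial (ZMod (p ^ n)),
      φ (AdjoinRoot.mk f a) = AdjoinRoot.mk (f.map g) (a.map g) := by
    intro a
    rw [hφ, AdjoinRoot.lift_mk, ← Polynomial.eval₂_map, ← AdjoinRoot.algebraMap_eq,
      ← Polynomial.aeval_def, AdjoinRoot.aeval_eq]
  -- kernel of φ is (p)
  have hker : ∀ y : AdjoinRoot f, φ y = 0 → y ∈ Ideal.span {(p : AdjoinRoot f)} := by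
    intro y hy
    obtain ⟨a, rfl⟩ := AdjoinRoot.mk_surjective y
    rw [hφmk, AdjoinRoot.mk_eq_zero] at hy
    obtain ⟨q', hq'⟩ := hy
    obtain ⟨q, rfl⟩ := Polynomial.map_surjective g gsurj q'
    have hmem : a - f * q ∈ RingHom.ker (Polynomial.mapRingHom g) := by
      rw [RingHom.mem_ker, Polynomial.coe_mapRingHom, Polynomial.map_sub, Polynomial.map_mul,
        hq', sub_self]
    rw [Polynomial.ker_mapRingHom] at hmem
    have hkspan : RingHom.ker g = Ideal.span {(p : ZMod (p ^ n))} := by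
      ext x
      rw [RingHom.mem_ker, hkerg, Ideal.mem_span_singleton]
    rw [hkspan, Ideal.map_span, Set.image_singleton, map_natCast] at hmem
    obtain ⟨c, hc⟩ := Ideal.mem_span_singleton.mp hmem
    have : AdjoinRoot.mk f a = (p : AdjoinRoot f) * AdjoinRoot.mk f c := by
      have : a = f * q + (p : Polynomial (ZMod (p ^ n))) * c := by
        rw [← hc]; ring
      rw [this, map_add, map_mul, map_mul, AdjoinRoot.mk_self, zero_mul, zero_add,
        map_natCast]
    rw [this]
    exact Ideal.mem_span_singleton.mpr ⟨AdjoinRoot.mk f c, rfl⟩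
  -- surjectivity of φ
  have hsurj : Function.Surjective φ := by
    intro z
    obtain ⟨b, rfl⟩ := AdjoinRoot.mk_surjective z
    obtain ⟨a, rfl⟩ := Polynomial.map_surjective g gsurj b
    exact ⟨AdjoinRoot.mk f a, hφmk a⟩
  -- elements outside (p) are units
  have hunit : ∀ y : AdjoinRoot f, y ∉ Ideal.span {(p : AdjoinRoot f)} → IsUnit y := by
    intro y hy
    have hφy : φ y ≠ 0 := fun h => hy (hker y h)
    obtain ⟨z, hz⟩ := hsurj (φ y)⁻¹
    have h0 : φ (y * z - 1) = 0 := by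
      rw [map_sub, map_mul, hz, map_one, mul_inv_cancel₀ hφy, sub_self]
    obtain ⟨c, hc⟩ := Ideal.mem_span_singleton.mp (hker _ h0)
    have hnil : IsNilpotent ((p : AdjoinRoot f) * c) := ⟨n, by rw [mul_pow, hpn, zero_mul]⟩
    have hyz : IsUnit (y * z) := by
      have : y * z = 1 + (p : AdjoinRoot f) * c := by rw [← hc]; ring
      rw [this]
      exact hnil.isUnit_one_add
    exact isUnit_of_mul_isUnit_left hyz
  -- every principal ideal is (p^i)
  have hB : ∀ x : AdjoinRoot f, ∃ i ≤ n,
      Ideal.span {x} = Ideal.span {(p : AdjoinRoot f) ^ i} := by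
    intro x
    by_cases hx : x = 0
    · exact ⟨n, le_refl n, by rw [hx, hpn]⟩
    · have hexists : ∃ j, x ∉ Ideal.span {(p : AdjoinRoot f) ^ (j + 1)} := by
        refine ⟨n - 1, ?_⟩
        rw [Nat.sub_add_cancel hn, hpn]
        intro h
        exact hx (zero_dvd_iff.mp (Ideal.mem_span_singleton.mp h))
      set i := Nat.find hexists with hi
      have hi1 : x ∉ Ideal.span {(p : AdjoinRoot f) ^ (i + 1)} := Nat.find_spec hexists
      have hin : i ≤ n := le_trans (Nat.find_min' hexists (by
        rw [Nat.sub_add_cancel hn, hpn]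
        intro h
        exact hx (zero_dvd_iff.mp (Ideal.mem_span_singleton.mp h)))) (Nat.sub_le n 1)
      have hmem : x ∈ Ideal.span {(p : AdjoinRoot f) ^ i} := by
        rcases Nat.eq_zero_or_pos i with h0 | hpos
        · rw [h0, pow_zero, Ideal.span_singleton_one]; trivial
        · have := Nat.find_min hexists (show i - 1 < i from Nat.sub_lt hpos one_pos)
          push_neg at this
          rwa [Nat.sub_add_cancel hpos] at this
      obtain ⟨y, hy⟩ := Ideal.mem_span_singleton.mp hmem
      have hyp : y ∉ Ideal.span {(p : AdjoinRoot f)} := by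
        intro hyp
        obtain ⟨z, hz⟩ := Ideal.mem_span_singleton.mp hyp
        apply hi1
        exact Ideal.mem_span_singleton.mpr ⟨z, by rw [hy, hz, pow_succ]; ring⟩
      refine ⟨i, hin, ?_⟩
      rw [hy]
      exact Ideal.span_singleton_mul_right_unit (hunit y hyp) _
  have main : ∀ I : Ideal (AdjoinRoot f), ∃ i ≤ n,
      I = Ideal.span {(p : AdjoinRoot f) ^ i} := by
    intro I
    have hex : ∃ i, (p : AdjoinRoot f) ^ i ∈ I := ⟨n, by rw [hpn]; exact I.zero_mem⟩
    refine ⟨Nat.find hex, Nat.find_min' hex (by rw [hpn]; exact I.zero_mem), ?_⟩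
    apply le_antisymm
    · intro x hx
      obtain ⟨j, hj, hspan⟩ := hB x
      have hpj : (p : AdjoinRoot f) ^ j ∈ I := by
        have h1 : (p : AdjoinRoot f) ^ j ∈ Ideal.span {x} := by
          rw [hspan]; exact Ideal.mem_span_singleton_self _
        exact ((Ideal.span_singleton_le_iff_mem I).mpr hx) h1
      have hji : Nat.find hex ≤ j := Nat.find_min' hex hpj
      have hxm : x ∈ Ideal.span {x} := Ideal.mem_span_singleton_self _
      rw [hspan] at hxm
      exact Ideal.span_singleton_le_span_singleton.mpr (pow_dvd_pow _ hji) hxm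
    · rw [Ideal.span_singleton_le_iff_mem]; exact Nat.find_spec hex
  refine ⟨main, ?_, ?_⟩
  · intro I J
    obtain ⟨i, hi, rfl⟩ := main I
    obtain ⟨j, hj, rfl⟩ := main J
    rcases le_total i j with h | h
    · right; exact Ideal.span_singleton_le_span_singleton.mpr (pow_dvd_pow _ h)
    · left; exact Ideal.span_singleton_le_span_singleton.mpr (pow_dvd_pow _ h)
  · rw [hpn]
    exact Ideal.span_singleton_eq_bot.mpr rfl
end

section
/- Let p be a prime, n, m ≥ 1, and GR(p^n,m) = (ZMod (p^n))[X]/(f) for a monic basic irreducible f of degree m. Then every element a ∈ GR(p^n,m) admits a unique p-adic representation a = a_0 + a_1·p + ⋯ + a_{n−1}·p^{n−1} in which every coefficient a_i satisfies a_i^{p^m} = a_i (i.e. the a_i are Teichmüller elements). -/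
/-!
Modulo `p` the Galois ring is the field with `p ^ m` elements, so `p ∣ y ^ p ^ m - y` for all `y`.
Since `p ∣ x - y` gives `p ^ (k + 1) ∣ x ^ p ^ k - y ^ p ^ k` and `p ^ n = 0`, the map
`y ↦ y ^ (p ^ m) ^ n` lands in the Teichmüller set and is congruent to `y` mod `p`, while two
Teichmüller elements congruent mod `p` coincide. The digits are then found one at a time: the
residue of `a` is lifted and the remainder divided by `p`. For uniqueness the leading factor `p`
has to be cancelled, which `p ^ (j + 1) ∣ p * z → p ^ j ∣ z` allows; this holds in `ZMod (p ^ n)`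
and passes coordinatewise to the free module `AdjoinRoot f`.
-/

open Polynomial

section TeichmullerExpansion

variable {R : Type*} [CommRing R] {p m n : ℕ}

theorem pow_pow_eq_self_of_pow_eq_self {x : R} {k : ℕ} (hx : x ^ k = x) (e : ℕ) :
    x ^ k ^ e = x := by
  induction e with
  | zero => rw [pow_zero, pow_one]
  | succ e ih => rw [pow_succ, pow_mul, ih, hx]

theorem dvd_pow_pow_sub_self_of_forall_dvd {a : R} {k : ℕ} (h : ∀ y : R, a ∣ y ^ k - y)
    (y : R) (e : ℕ) : a ∣ y ^ k ^ e - y := by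
  induction e with
  | zero => rw [pow_zero, pow_one, sub_self]; exact dvd_zero a
  | succ e ih =>
    rw [pow_succ, pow_mul, ← sub_add_sub_cancel _ (y ^ k ^ e)]
    exact dvd_add (h _) ih

theorem eq_of_pow_dvd_sub_of_pow_eq_zero {x y : R} {k : ℕ} (hnil : (p : R) ^ n = 0) (hk : n ≤ k)
    (h : (p : R) ^ k ∣ x - y) : x = y := by
  rw [← sub_eq_zero, ← zero_dvd_iff, ← hnil]
  exact (pow_dvd_pow _ hk).trans h

theorem eq_of_pow_eq_self_of_dvd_sub (hm : 0 < m) (hnil : (p : R) ^ n = 0) {x y : R}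
    (hx : x ^ p ^ m = x) (hy : y ^ p ^ m = y) (hxy : (p : R) ∣ x - y) : x = y := by
  have key := dvd_sub_pow_of_dvd_sub hxy (m * n)
  rw [pow_mul, pow_pow_eq_self_of_pow_eq_self hx, pow_pow_eq_self_of_pow_eq_self hy] at key
  exact eq_of_pow_dvd_sub_of_pow_eq_zero hnil (Nat.le_succ_of_le (Nat.le_mul_of_pos_left n hm)) key

theorem exists_pow_eq_self_dvd_sub (hm : 0 < m) (hnil : (p : R) ^ n = 0)
    (hfrob : ∀ y : R, (p : R) ∣ y ^ p ^ m - y) (y : R) :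
    ∃ t : R, t ^ p ^ m = t ∧ (p : R) ∣ y - t := by
  refine ⟨y ^ (p ^ m) ^ n, ?_, dvd_sub_comm.mp (dvd_pow_pow_sub_self_of_forall_dvd hfrob y n)⟩
  have key := dvd_sub_pow_of_dvd_sub (hfrob y) (m * n)
  rw [pow_mul p m n] at key
  rw [← pow_mul, mul_comm, pow_mul]
  exact eq_of_pow_dvd_sub_of_pow_eq_zero hnil (Nat.le_succ_of_le (Nat.le_mul_of_pos_left n hm)) key

theorem Fin.sum_cons_mul_pow {k : ℕ} (t x : R) (c : Fin k → R) :
    ∑ i, (Fin.cons t c : Fin (k + 1) → R) i * x ^ (i : ℕ) = t + x * ∑ i, c i * x ^ (i : ℕ) := by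
  simp only [Fin.sum_univ_succ, Fin.cons_zero, Fin.cons_succ, Fin.val_zero, Fin.val_succ,
    pow_zero, mul_one, pow_succ', Finset.mul_sum, mul_left_comm]

theorem exists_pow_eq_self_pow_dvd_sub_sum (hm : 0 < m) (hnil : (p : R) ^ n = 0)
    (hfrob : ∀ y : R, (p : R) ∣ y ^ p ^ m - y) (k : ℕ) (a : R) :
    ∃ c : Fin k → R, (∀ i, c i ^ p ^ m = c i) ∧ (p : R) ^ k ∣ a - ∑ i, c i * (p : R) ^ (i : ℕ) := by
  induction k generalizing a with
  | zero => exact ⟨Fin.elim0, fun i ↦ i.elim0, by rw [pow_zero]; exact one_dvd _⟩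
  | succ k ih =>
    obtain ⟨t, ht, a', ha'⟩ := exists_pow_eq_self_dvd_sub hm hnil hfrob a
    obtain ⟨c, hc, hdvd⟩ := ih a'
    refine ⟨Fin.cons t c, Fin.cases ht hc, ?_⟩
    rw [Fin.sum_cons_mul_pow, ← sub_sub, ha', ← mul_sub, pow_succ']
    exact mul_dvd_mul_left _ hdvd

theorem eq_of_pow_dvd_sum_sub_sum (hm : 0 < m) (hnil : (p : R) ^ n = 0)
    (hcancel : ∀ j < n, ∀ z : R, (p : R) ^ (j + 1) ∣ p * z → (p : R) ^ j ∣ z) {k : ℕ}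
    (hk : k ≤ n) (c d : Fin k → R) (hc : ∀ i, c i ^ p ^ m = c i) (hd : ∀ i, d i ^ p ^ m = d i)
    (h : (p : R) ^ k ∣ ∑ i, c i * (p : R) ^ (i : ℕ) - ∑ i, d i * (p : R) ^ (i : ℕ)) : c = d := by
  induction k with
  | zero => exact funext fun i ↦ i.elim0
  | succ k ih =>
    induction c using Fin.consCases with | cons a c =>
    induction d using Fin.consCases with | cons b d =>
    simp only [Fin.forall_fin_succ, Fin.cons_zero, Fin.cons_succ] at hc hd
    rw [Fin.sum_cons_mul_pow, Fin.sum_cons_mul_pow, add_sub_add_comm, ← mul_sub] at h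
    obtain rfl : a = b := eq_of_pow_eq_self_of_dvd_sub hm hnil hc.1 hd.1
      ((dvd_add_left (dvd_mul_right _ _)).mp ((dvd_pow_self _ k.succ_ne_zero).trans h))
    rw [sub_self, zero_add] at h
    rw [ih (by omega) c d hc.2 hd.2 (hcancel k (by omega) _ h)]

theorem existsUnique_teichmuller_expansion (hm : 0 < m) (hnil : (p : R) ^ n = 0)
    (hfrob : ∀ y : R, (p : R) ∣ y ^ p ^ m - y)
    (hcancel : ∀ j < n, ∀ z : R, (p : R) ^ (j + 1) ∣ p * z → (p : R) ^ j ∣ z) (a : R) :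
    ∃! c : Fin n → R, (∀ i, c i ^ p ^ m = c i) ∧ a = ∑ i, c i * (p : R) ^ (i : ℕ) := by
  obtain ⟨c, hc, hdvd⟩ := exists_pow_eq_self_pow_dvd_sub_sum hm hnil hfrob n a
  refine ⟨c, ⟨hc, ?_⟩, ?_⟩
  · rwa [hnil, zero_dvd_iff, sub_eq_zero] at hdvd
  · rintro d ⟨hd, rfl⟩
    exact eq_of_pow_dvd_sum_sub_sum hm hnil hcancel le_rfl d c hd hc hdvd

end TeichmullerExpansion

theorem ZMod.pow_dvd_of_pow_succ_dvd_mul {p n j : ℕ} (hp : p ≠ 0) (hj : j < n) {z : ZMod (p ^ n)}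
    (h : (p : ZMod (p ^ n)) ^ (j + 1) ∣ p * z) : (p : ZMod (p ^ n)) ^ j ∣ z := by
  obtain ⟨a, rfl⟩ := ZMod.intCast_surjective z
  obtain ⟨w, hw⟩ := h
  obtain ⟨b, rfl⟩ := ZMod.intCast_surjective w
  have hdvd : ((p ^ n : ℕ) : ℤ) ∣ p * (a - p ^ j * b) := by
    rw [← ZMod.intCast_zmod_eq_zero_iff_dvd]
    push_cast
    rw [mul_sub, ← mul_assoc, ← pow_succ', hw, sub_self]
  rw [Nat.cast_pow, ← Nat.sub_add_cancel (Nat.one_le_of_lt hj), pow_succ',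
    mul_dvd_mul_iff_left (by exact_mod_cast hp)] at hdvd
  obtain ⟨t, ht⟩ := (dvd_sub_left (dvd_mul_right _ b)).mp
    ((pow_dvd_pow (p : ℤ) (show j ≤ n - 1 by omega)).trans hdvd)
  exact ⟨t, by rw [ht]; push_cast; rfl⟩

theorem Module.Free.algebraMap_dvd_of_algebraMap_dvd_mul {A B : Type*} [CommRing A] [CommRing B]
    [Algebra A B] [Module.Free A B] {r s t : A} (h : ∀ z : A, r ∣ s * z → t ∣ z) {x : B}
    (hx : algebraMap A B r ∣ algebraMap A B s * x) : algebraMap A B t ∣ x := by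
  obtain ⟨y, hy⟩ := hx
  let b := Module.Free.chooseBasis A B
  have hcoord : ∀ i, t ∣ b.repr x i := fun i ↦ h _ ⟨b.repr y i, by
    simpa only [← Algebra.smul_def, map_smul, Finsupp.smul_apply, smul_eq_mul] using
      congr_arg (b.repr · i) hy⟩
  choose u hu using hcoord
  refine ⟨∑ i ∈ (b.repr x).support, u i • b i, ?_⟩
  conv_lhs => rw [← b.linearCombination_repr x]
  rw [Finsupp.linearCombination_apply, Finsupp.sum, Finset.mul_sum]
  refine Finset.sum_congr rfl fun i _ ↦ ?_
  rw [hu i, mul_smul, Algebra.smul_def t]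

theorem ZMod.ker_castHom_le {k d : ℕ} (h : d ∣ k) :
    RingHom.ker (ZMod.castHom h (ZMod d)) ≤ Ideal.span {(d : ZMod k)} := by
  intro z hz
  obtain ⟨a, rfl⟩ := ZMod.intCast_surjective z
  rw [RingHom.mem_ker, map_intCast, ZMod.intCast_zmod_eq_zero_iff_dvd] at hz
  obtain ⟨t, rfl⟩ := hz
  exact Ideal.mem_span_singleton.mpr ⟨t, by push_cast; rfl⟩

theorem AdjoinRoot.map_mk {R S : Type*} [CommRing R] [CommRing S] (q : R →+* S) (f : R[X])
    (f' : S[X]) (h : f' ∣ f.map q) (g : R[X]) :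
    AdjoinRoot.map q f f' h (AdjoinRoot.mk f g) = AdjoinRoot.mk f' (g.map q) := by
  induction g using Polynomial.induction_on <;> simp_all

theorem AdjoinRoot.ker_map_le {R S : Type*} [CommRing R] [CommRing S] {q : R →+* S}
    (hq : Function.Surjective q) (f : R[X]) :
    RingHom.ker (AdjoinRoot.map q f (f.map q) dvd_rfl) ≤ (RingHom.ker q).map (AdjoinRoot.of f) := by
  intro x hx
  obtain ⟨g, rfl⟩ := AdjoinRoot.mk_surjective x
  obtain ⟨h', hh'⟩ : f.map q ∣ g.map q := by
    rwa [RingHom.mem_ker, AdjoinRoot.map_mk, AdjoinRoot.mk_eq_zero] at hx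
  obtain ⟨h, rfl⟩ := Polynomial.map_surjective q hq h'
  have hmem : g - f * h ∈ (RingHom.ker q).map C := by
    rw [← Polynomial.ker_mapRingHom, RingHom.mem_ker, coe_mapRingHom, Polynomial.map_sub,
      Polynomial.map_mul, hh', sub_self]
  have hmk : AdjoinRoot.mk f g = AdjoinRoot.mk f (g - f * h) := by
    rw [map_sub, map_mul, AdjoinRoot.mk_self, zero_mul, sub_zero]
  rw [hmk, AdjoinRoot.of, ← Ideal.map_map]
  exact Ideal.mem_map_of_mem _ hmem

theorem AdjoinRoot.natCast_dvd_pow_pow_natDegree_sub_self {p n : ℕ} (hp : p.Prime) (hn : n ≠ 0)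
    {f : (ZMod (p ^ n))[X]} (hf : f.Monic)
    (hirr : Irreducible (f.map (ZMod.castHom (dvd_pow_self p hn) (ZMod p)))) (y : AdjoinRoot f) :
    (p : AdjoinRoot f) ∣ y ^ p ^ f.natDegree - y := by
  have := Fact.mk hp
  have := Fact.mk hirr
  set q := ZMod.castHom (dvd_pow_self p hn) (ZMod p)
  have hfq : (f.map q).Monic := hf.map q
  have := hfq.finite_adjoinRoot
  have := Module.finite_of_finite (ZMod p) (M := AdjoinRoot (f.map q))
  have := Fintype.ofFinite (AdjoinRoot (f.map q))
  have hcard : Fintype.card (AdjoinRoot (f.map q)) = p ^ f.natDegree := by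
    rw [Module.card_eq_pow_finrank (K := ZMod p), ZMod.card, (AdjoinRoot.powerBasis' hfq).finrank,
      AdjoinRoot.powerBasis'_dim, hf.natDegree_map]
  have hker : y ^ p ^ f.natDegree - y ∈ RingHom.ker (AdjoinRoot.map q f (f.map q) dvd_rfl) := by
    rw [RingHom.mem_ker, map_sub, map_pow, ← hcard, FiniteField.pow_card, sub_self]
  have hmem := Ideal.map_mono (ZMod.ker_castHom_le _) (AdjoinRoot.ker_map_le
    (ZMod.castHom_surjective _) f hker)
  rwa [Ideal.map_span, Set.image_singleton, map_natCast, Ideal.mem_span_singleton] at hmem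

/-- Every element of the Galois ring `GR(p^n, m)` has a unique `p`-adic
representation `a = a₀ + a₁ p + ⋯ + a_{n-1} p^{n-1}` in which every coefficient `aᵢ` is a
Teichmüller element, i.e. satisfies `aᵢ ^ (p^m) = aᵢ`. -/
theorem galois_ring_p_adic_representation (p n m : ℕ) (hp : p.Prime) (hn : 0 < n) (hm : 0 < m)
    (f : Polynomial (ZMod (p ^ n))) (hf : f.Monic) (hdeg : f.natDegree = m)
    (hirr : Irreducible (f.map (ZMod.castHom (dvd_pow_self p hn.ne') (ZMod p)))) :
    ∀ a : AdjoinRoot f, ∃! c : Fin n → AdjoinRoot f,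
      (∀ i, (c i) ^ p ^ m = c i) ∧ a = ∑ i, c i * (p : AdjoinRoot f) ^ (i : ℕ) := by
  have := hf.free_adjoinRoot
  refine existsUnique_teichmuller_expansion hm ?_ ?_ ?_
  · rw [← Nat.cast_pow, ← map_natCast (algebraMap (ZMod (p ^ n)) (AdjoinRoot f)),
      ZMod.natCast_self, map_zero]
  · exact hdeg ▸ AdjoinRoot.natCast_dvd_pow_pow_natDegree_sub_self hp hn.ne' hf hirr
  · intro j hj z hz
    simpa only [map_pow, map_natCast] using
      Module.Free.algebraMap_dvd_of_algebraMap_dvd_mul (A := ZMod (p ^ n)) (x := z)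
        (fun _ ↦ ZMod.pow_dvd_of_pow_succ_dvd_mul hp.ne_zero hj)
        (by simpa only [map_pow, map_natCast] using hz)
end

section
/- Let p be a prime, n, m ≥ 1, and GR(p^n,m) = (ZMod (p^n))[X]/(f) for a monic basic irreducible f of degree m. If x and y are distinct elements of GR(p^n,m) satisfying x^{p^m} = x and y^{p^m} = y, then x − y is a unit of GR(p^n,m). In other words, the Teichmüller set T = {x : x^{p^m} = x} is a subtractive subset of GR(p^n,m). -/
/-!
Reduction of coefficients modulo `p` gives a surjection `φ` from `GR(p^n, m)` onto the field
`𝔽_p[X]/(f̄)` whose kernel consists of nilpotents: an element of the kernel is represented by a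
polynomial all of whose coefficients are divisible by `p`. Hence an element is a unit as soon
as its image is nonzero, and it remains to see that distinct Teichmüller elements `x ≠ y` have
distinct images. With `q = p^m`, the element
`s = ∑ xⁱ y^(q-1-i)` satisfies `s (x - y) = x^q - y^q = x - y`; if `φ x = φ y`, then
`φ s = q φ(x)^(q-1) = 0`, so `s` is nilpotent, `1 - s` is a unit and `(x - y)(1 - s) = 0`
forces `x = y`.
-/

open Polynomial

theorem ZMod.isNilpotent_of_castHom_eq_zero {p n : ℕ} (h : p ∣ p ^ n) {a : ZMod (p ^ n)}
    (ha : ZMod.castHom h (ZMod p) a = 0) : IsNilpotent a := by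
  obtain ⟨k, rfl⟩ := ZMod.intCast_surjective a
  rw [map_intCast, ZMod.intCast_zmod_eq_zero_iff_dvd] at ha
  obtain ⟨t, rfl⟩ := ha
  refine ⟨n, ?_⟩
  rw [Int.cast_mul, mul_pow, Int.cast_natCast, ← Nat.cast_pow, ZMod.natCast_self, zero_mul]

theorem isUnit_of_isUnit_map {A B : Type*} [CommRing A] [Ring B] {φ : A →+* B}
    (hφ : Function.Surjective φ) (hker : ∀ a, φ a = 0 → IsNilpotent a) {a : A}
    (ha : IsUnit (φ a)) : IsUnit a := by
  obtain ⟨b, hb⟩ := hφ ↑ha.unit⁻¹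
  have hab : IsNilpotent (a * b - 1) := hker _ (by simp [hb])
  exact isUnit_of_mul_isUnit_left (by simpa using hab.isUnit_add_one)

theorem eq_of_pow_eq_self_of_map_eq {A B : Type*} [CommRing A] [CommRing B] {φ : A →+* B}
    (hker : ∀ a, φ a = 0 → IsNilpotent a) {q : ℕ} (hq : (q : B) = 0) {x y : A}
    (hx : x ^ q = x) (hy : y ^ q = y) (hxy : φ x = φ y) : x = y := by
  set s : A := ∑ i ∈ Finset.range q, x ^ i * y ^ (q - 1 - i)
  have hs : s * (x - y) = x - y := by rw [geom_sum₂_mul, hx, hy]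
  have hφs : φ s = 0 := by
    -- modulo the kernel, `s` becomes `q * x ^ (q - 1)`
    calc φ s = ∑ _i ∈ Finset.range q, φ x ^ (q - 1) := by
          rw [map_sum]
          refine Finset.sum_congr rfl fun i hi => ?_
          rw [map_mul, map_pow, map_pow, ← hxy, ← pow_add,
            Nat.add_sub_of_le (Nat.le_sub_one_of_lt (Finset.mem_range.1 hi))]
      _ = 0 := by simp [hq]
  have hunit : IsUnit (1 - s) := (hker s hφs).isUnit_one_sub
  have : (x - y) * (1 - s) = 0 := by rw [mul_sub, mul_one, mul_comm, hs, sub_self]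
  exact sub_eq_zero.1 ((hunit.mul_left_eq_zero).1 this)

namespace AdjoinRoot

variable {R S : Type*} [CommRing R] [CommRing S] {c : R →+* S} (f : R[X])

theorem map_mk_s6 {q : S[X]} (h : q ∣ f.map c) (g : R[X]) :
    map c f q h (mk f g) = mk q (g.map c) := by
  rw [map, lift_mk, ← eval₂_map, ← algebraMap_eq, ← aeval_def, aeval_eq]

theorem map_surjective (hc : Function.Surjective c) {q : S[X]} (h : q ∣ f.map c) :
    Function.Surjective (map c f q h) := by
  intro z
  obtain ⟨g', rfl⟩ := mk_surjective z
  obtain ⟨g, rfl⟩ := Polynomial.map_surjective c hc g'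
  exact ⟨mk f g, map_mk_s6 f h g⟩

theorem isNilpotent_of_map_eq_zero (hc : Function.Surjective c)
    (hker : ∀ a, c a = 0 → IsNilpotent a) {a : AdjoinRoot f}
    (ha : map c f (f.map c) dvd_rfl a = 0) : IsNilpotent a := by
  obtain ⟨g, rfl⟩ := mk_surjective a
  rw [map_mk_s6, mk_eq_zero] at ha
  obtain ⟨h', hh'⟩ := ha
  obtain ⟨h, rfl⟩ := Polynomial.map_surjective c hc h'
  have hnil : IsNilpotent (g - f * h) := by
    refine Polynomial.isNilpotent_iff.2 fun i => hker _ ?_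
    rw [← coeff_map, Polynomial.map_sub, Polynomial.map_mul, hh', sub_self, coeff_zero]
  have hmk : mk f g = mk f (g - f * h) := by simp
  rw [hmk]
  exact hnil.map _

end AdjoinRoot

theorem galois_ring_teichmuller_subtractive_general (p n m : ℕ) (hp : p.Prime) (hn : 0 < n) (hm : 0 < m)
    (f : Polynomial (ZMod (p ^ n)))
    (hirr : Irreducible (f.map (ZMod.castHom (dvd_pow_self p hn.ne') (ZMod p)))) :
    ∀ x y : AdjoinRoot f, x ^ p ^ m = x → y ^ p ^ m = y → x ≠ y →
      IsUnit (x - y) := by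
  intro x y hx hy hxy
  have := Fact.mk hp
  have := Fact.mk hirr
  set c := ZMod.castHom (dvd_pow_self p hn.ne') (ZMod p)
  set φ := AdjoinRoot.map c f (f.map c) dvd_rfl
  have hc : Function.Surjective c := ZMod.castHom_surjective _
  have hker : ∀ a, φ a = 0 → IsNilpotent a :=
    fun _ => AdjoinRoot.isNilpotent_of_map_eq_zero f hc
      (fun _ => ZMod.isNilpotent_of_castHom_eq_zero _)
  have hq : ((p ^ m : ℕ) : AdjoinRoot (f.map c)) = 0 := by
    rw [Nat.cast_pow, ← map_natCast (AdjoinRoot.of _), ZMod.natCast_self, map_zero,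
      zero_pow hm.ne']
  have hφ : φ x ≠ φ y := fun h => hxy (eq_of_pow_eq_self_of_map_eq hker hq hx hy h)
  exact isUnit_of_isUnit_map (AdjoinRoot.map_surjective f hc _) hker
    (by rw [map_sub]; exact (sub_ne_zero.2 hφ).isUnit)

/-- The Teichmüller set `T = {x : x ^ (p^m) = x}` of the Galois ring
`GR(p^n, m)` is subtractive: the difference of any two distinct Teichmüller elements is a
unit. -/
theorem galois_ring_teichmuller_subtractive (p n m : ℕ) (hp : p.Prime) (hn : 0 < n) (hm : 0 < m)
    (f : Polynomial (ZMod (p ^ n))) (hf : f.Monic) (hdeg : f.natDegree = m)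
    (hirr : Irreducible (f.map (ZMod.castHom (dvd_pow_self p hn.ne') (ZMod p)))) :
    ∀ x y : AdjoinRoot f, x ^ p ^ m = x → y ^ p ^ m = y → x ≠ y →
      IsUnit (x - y) :=
  galois_ring_teichmuller_subtractive_general p n m hp hn hm f hirr
end

section
/- Let A be a nontrivial commutative ring, α_1, …, α_N ∈ A such that α_i − α_j is a unit for all i ≠ j, v_1, …, v_N units of A, and 1 ≤ k ≤ N. Then the A-linear map sending a polynomial f ∈ A[X] with deg f < k to the vector (v_1 f(α_1), …, v_N f(α_N)) ∈ A^N is injective; consequently the generalized Reed–Solomon code GRS_v(N,k) = {(v_1 f(α_1), …, v_N f(α_N)) : f ∈ A[X], deg f < k} is a free A-module of rank k. -/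
/-- The evaluation (encoding) map of a generalized Reed–Solomon code: it sends a polynomial
of degree `< k` to the vector of its scaled evaluations at the points `α i`. -/
noncomputable def GRSmap (A : Type*) [CommRing A] {N : ℕ} (k : ℕ) (α v : Fin N → A) :
    Polynomial.degreeLT A k →ₗ[A] (Fin N → A) where
  toFun f i := v i * Polynomial.eval (α i) (f : Polynomial A)
  map_add' f g := by funext i; simp [mul_add]
  map_smul' c f := by funext i; simp [Polynomial.eval_smul]; ring

/-!
The values of a polynomial of degree `< k` at `k` of the points are the product of the
`k × k` Vandermonde matrix with its coefficient vector. The Vandermonde determinant is the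
product of the differences of the points, hence a unit, so the evaluation map is injective, and
multiplying by the units `v i` keeps it so. The code is then isomorphic to the free module of
polynomials of degree `< k`, and inherits its monomial basis.
-/

open Polynomial Matrix

theorem Matrix.isUnit_det_vandermonde {R : Type*} [CommRing R] {n : ℕ} {β : Fin n → R}
    (hβ : Pairwise fun i j => IsUnit (β i - β j)) : IsUnit (vandermonde β).det := by
  rw [det_vandermonde]
  exact IsUnit.prod_univ_iff.mpr fun i => IsUnit.prod_iff.mpr fun j hj =>
    hβ (Finset.mem_Ioi.mp hj).ne'

theorem Polynomial.vandermonde_mulVec_degreeLTEquiv {R : Type*} [CommRing R] {n : ℕ}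
    (β : Fin n → R) (p : degreeLT R n) :
    vandermonde β *ᵥ degreeLTEquiv R n p = fun i => (p : R[X]).eval (β i) := by
  funext i
  rw [eval_eq_sum_degreeLTEquiv p.2, mulVec, dotProduct]
  simp only [vandermonde_apply, mul_comm]

theorem Polynomial.degreeLT_eval_injective {R : Type*} [CommRing R] {n : ℕ} {β : Fin n → R}
    (hβ : Pairwise fun i j => IsUnit (β i - β j)) :
    Function.Injective fun (p : degreeLT R n) i => (p : R[X]).eval (β i) := by
  intro p q hpq
  have hV : Function.Injective (vandermonde β).mulVec :=
    mulVec_injective_of_isUnit ((isUnit_iff_isUnit_det _).mpr (isUnit_det_vandermonde hβ))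
  apply (degreeLTEquiv R n).injective
  apply hV
  simpa only [vandermonde_mulVec_degreeLTEquiv] using hpq

theorem GRSmap_injective {A : Type*} [CommRing A] {N k : ℕ} {α v : Fin N → A}
    (hα : Pairwise fun i j => IsUnit (α i - α j)) (hv : ∀ i, IsUnit (v i)) (hkN : k ≤ N) :
    Function.Injective (GRSmap A k α v) := by
  intro p q hpq
  have hβ : Pairwise fun i j => IsUnit ((α ∘ Fin.castLE hkN) i - (α ∘ Fin.castLE hkN) j) :=
    fun i j hij => hα ((Fin.castLE_injective hkN).ne hij)
  refine degreeLT_eval_injective hβ (funext fun i => ?_)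
  exact (hv _).mul_left_cancel (congrFun hpq (Fin.castLE hkN i))

theorem GRS_free_of_rank_general (A : Type*) [CommRing A] (N k : ℕ)
    (α v : Fin N → A) (hα : ∀ i j, i ≠ j → IsUnit (α i - α j)) (hv : ∀ i, IsUnit (v i))
    (hkN : k ≤ N) :
    Function.Injective (GRSmap A k α v) ∧
      Nonempty (Module.Basis (Fin k) A ↥(LinearMap.range (GRSmap A k α v))) := by
  have hinj := GRSmap_injective hα hv hkN
  exact ⟨hinj, ⟨(degreeLT.basis A k).map (LinearEquiv.ofInjective _ hinj)⟩⟩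

/-- Over a nontrivial commutative ring `A`, given pairwise-subtractive
evaluation points `α` and unit multipliers `v`, the encoding map of the generalized
Reed–Solomon code `GRS_v(N, k)` (for `1 ≤ k ≤ N`) is injective, and the code (its range) is
a free `A`-module of rank `k`. -/
theorem GRS_free_of_rank (A : Type*) [CommRing A] [Nontrivial A] (N k : ℕ)
    (α v : Fin N → A) (hα : ∀ i j, i ≠ j → IsUnit (α i - α j)) (hv : ∀ i, IsUnit (v i))
    (hk1 : 1 ≤ k) (hkN : k ≤ N) :
    Function.Injective (GRSmap A k α v) ∧
      Nonempty (Module.Basis (Fin k) A ↥(LinearMap.range (GRSmap A k α v))) :=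
  GRS_free_of_rank_general A N k α v hα hv hkN
end

section
/- Let A be a nontrivial commutative ring, α_1, …, α_N ∈ A such that α_i − α_j is a unit for all i ≠ j, v_1, …, v_N units of A, and 1 ≤ k ≤ N. Then every nonzero codeword of the generalized Reed–Solomon code GRS_v(N,k) has Hamming weight at least N − k + 1, and there exists a nonzero codeword of Hamming weight exactly N − k + 1; that is, the minimum Hamming distance of GRS_v(N,k) equals N − k + 1 (GRS codes are MDS). -/
open Polynomial Finset

theorem Polynomial.eq_zero_of_degree_lt_of_eval_index_eq_zero_of_isUnit_sub {R ι : Type*}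
    [CommRing R] {v : ι → R} (s : Finset ι) (hvs : ∀ i ∈ s, ∀ j ∈ s, i ≠ j → IsUnit (v i - v j))
    {p : R[X]} (hdeg : p.degree < #s) (heval : ∀ i ∈ s, p.eval (v i) = 0) : p = 0 := by
  classical
  nontriviality R
  induction s using Finset.induction_on generalizing p with
  | empty => simpa using hdeg
  | insert a s ha ih =>
    obtain ⟨q, rfl⟩ : X - C (v a) ∣ p := dvd_iff_isRoot.2 (heval a (mem_insert_self a s))
    have hq : q.degree < #s := by
      rw [card_insert_of_notMem ha, mul_comm, (monic_X_sub_C _).degree_mul, degree_X_sub_C,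
        Nat.cast_add_one] at hdeg
      exact lt_of_add_lt_add_right hdeg
    suffices q = 0 by rw [this, mul_zero]
    refine ih (fun i hi j hj => hvs i (mem_insert_of_mem hi) j (mem_insert_of_mem hj)) hq
      fun i hi => ?_
    have hi' : (v i - v a) * q.eval (v i) = 0 := by
      simpa using heval i (mem_insert_of_mem hi)
    exact (hvs i (mem_insert_of_mem hi) a (mem_insert_self a s)
      (ne_of_mem_of_not_mem hi ha)).mul_right_eq_zero.1 hi'

namespace Lagrange

variable {R ι : Type*} [CommRing R] {s : Finset ι} {v : ι → R}

theorem isUnit_eval_nodal {x : R} (h : ∀ i ∈ s, IsUnit (x - v i)) :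
    IsUnit ((nodal s v).eval x) := by
  rw [eval_nodal]
  exact IsUnit.prod_iff.2 h

theorem nodal_mem_degreeLT [Nontrivial R] {k : ℕ} : nodal s v ∈ degreeLT R k ↔ #s < k := by
  rw [mem_degreeLT, degree_nodal, Nat.cast_lt]

end Lagrange

theorem Set.ncard_setOf_ne_zero {ι M : Type*} [Fintype ι] [Zero M] [DecidableEq M] (c : ι → M) :
    {i | c i ≠ 0}.ncard = Fintype.card ι - #{i | c i = 0} := by
  classical
  rw [Set.ncard_eq_toFinset_card', Set.toFinset_ofPred, filter_not, card_univ_sdiff]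

section GRS

variable {A : Type*} [CommRing A] {N k : ℕ} {α v : Fin N → A}

theorem GRSmap_apply (f : degreeLT A k) (i : Fin N) :
    GRSmap A k α v f i = v i * (f : A[X]).eval (α i) :=
  rfl

theorem card_zeros_GRSmap_lt [DecidableEq A] (hα : ∀ i j, i ≠ j → IsUnit (α i - α j))
    (hv : ∀ i, IsUnit (v i)) {f : degreeLT A k} (hf : GRSmap A k α v f ≠ 0) :
    #{i | GRSmap A k α v f i = 0} < k := by
  by_contra! hk
  have hf0 : (f : A[X]) = 0 := by
    refine eq_zero_of_degree_lt_of_eval_index_eq_zero_of_isUnit_sub {i | GRSmap A k α v f i = 0}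
      (fun i _ j _ hij => hα i j hij) ?_ fun i hi => ?_
    · exact (mem_degreeLT.1 f.2).trans_le (by exact_mod_cast hk)
    · rw [mem_filter, GRSmap_apply] at hi
      exact (hv i).mul_right_eq_zero.1 hi.2
  exact hf (by rw [show f = 0 from Subtype.ext hf0, map_zero])

theorem zeros_GRSmap_nodal [Nontrivial A] [DecidableEq A]
    (hα : ∀ i j, i ≠ j → IsUnit (α i - α j)) (hv : ∀ i, IsUnit (v i))
    {T : Finset (Fin N)} (hT : #T < k) :
    ({i | GRSmap A k α v ⟨Lagrange.nodal T α, Lagrange.nodal_mem_degreeLT.2 hT⟩ i = 0} :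
      Finset (Fin N)) = T := by
  ext i
  rw [mem_filter, GRSmap_apply]
  refine ⟨fun hi => ?_, fun hi => ⟨mem_univ i, by rw [Lagrange.eval_nodal_at_node hi, mul_zero]⟩⟩
  by_contra hiT
  refine ((hv i).mul (Lagrange.isUnit_eval_nodal fun j hj => hα i j ?_)).ne_zero hi.2
  rintro rfl
  exact hiT hj

end GRS

/-- Over a nontrivial commutative ring `A`, given pairwise-subtractive
evaluation points and unit multipliers, every nonzero codeword of the generalized
Reed–Solomon code `GRS_v(N, k)` (for `1 ≤ k ≤ N`) has Hamming weight at least `N - k + 1`,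
and some nonzero codeword has Hamming weight exactly `N - k + 1`: GRS codes are MDS. -/
theorem GRS_is_MDS (A : Type*) [CommRing A] [Nontrivial A] (N k : ℕ)
    (α v : Fin N → A) (hα : ∀ i j, i ≠ j → IsUnit (α i - α j)) (hv : ∀ i, IsUnit (v i))
    (hk1 : 1 ≤ k) (hkN : k ≤ N) :
    (∀ c ∈ LinearMap.range (GRSmap A k α v), c ≠ 0 →
        N - k + 1 ≤ Set.ncard {i | c i ≠ 0}) ∧
    (∃ c ∈ LinearMap.range (GRSmap A k α v), c ≠ 0 ∧
        Set.ncard {i | c i ≠ 0} = N - k + 1) := by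
  classical
  refine ⟨?_, ?_⟩
  · rintro _ ⟨f, rfl⟩ hf
    have := card_zeros_GRSmap_lt hα hv hf
    rw [Set.ncard_setOf_ne_zero, Fintype.card_fin]
    omega
  · obtain ⟨T, -, hT⟩ := exists_subset_card_eq (s := (univ : Finset (Fin N))) (n := k - 1)
      (by rw [card_univ, Fintype.card_fin]; omega)
    have hTk : #T < k := by omega
    obtain ⟨c, hc, hzeros⟩ : ∃ c ∈ LinearMap.range (GRSmap A k α v), #{i | c i = 0} = k - 1 :=
      ⟨_, LinearMap.mem_range_self _ _, by rw [zeros_GRSmap_nodal hα hv hTk, hT]⟩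
    have hweight : Set.ncard {i | c i ≠ 0} = N - k + 1 := by
      rw [Set.ncard_setOf_ne_zero, hzeros, Fintype.card_fin]
      omega
    refine ⟨c, hc, fun hc0 => ?_, hweight⟩
    simp [hc0] at hweight
end

section
/- Let p be a prime, n, m ≥ 1, and S = GR(p^n,m) = (ZMod (p^n))[X]/(f) for a monic basic irreducible f of degree m. Let C ⊆ S^N be a free MDS code of rank k with 0 < k < N, i.e. C is a free S-submodule of rank k whose minimum Hamming distance equals N − k + 1. Then the dual code C^⊥ = {x ∈ S^N : Σ_i x_i c_i = 0 for all c ∈ C} is a free S-module of rank N − k whose minimum Hamming distance equals k + 1; that is, C^⊥ is a free MDS code of rank N − k. -/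
/-!
Let `C ⊆ R^N` be free of rank `k` with minimum distance at least `N - k + 1`, over a finite
commutative ring `R`. Every `k`-set `s` of coordinates is an information set: a codeword vanishing
on `s` has weight at most `N - k`, so restriction to `s` is injective, and it is bijective because
`|C| = |R|^k`. Hence a dual word supported in a `k`-set `s` is orthogonal to codewords with
arbitrary prescribed values on `s` and must vanish, so the dual has distance at least `k + 1`.
Fixing one information set `s` and writing `c⁽ⁱ⁾` for the codeword equal to `eᵢ` on `s`, the
parity-check words `eⱼ - ∑_{i ∈ s} c⁽ⁱ⁾ⱼ eᵢ` (`j ∉ s`) lie in the dual, so restriction to `sᶜ` maps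
the dual isomorphically onto `R^(N - k)`; each of them has weight at most `k + 1`.
-/

/-- The dual code of a linear code `C ⊆ A^N` with respect to the standard Euclidean inner
product. -/
def dualCode (A : Type*) [CommRing A] {N : ℕ} (C : Submodule A (Fin N → A)) :
    Submodule A (Fin N → A) where
  carrier := {x | ∀ c ∈ C, ∑ i, x i * c i = 0}
  add_mem' := by
    intro a b ha hb c hc
    simp only [Set.mem_setOf_eq] at *
    simp [add_mul, Finset.sum_add_distrib, ha c hc, hb c hc]
  zero_mem' := by intro c hc; simp
  smul_mem' := by
    intro r x hx c hc
    simp only [Set.mem_setOf_eq, Pi.smul_apply, smul_eq_mul, mul_assoc, ← Finset.mul_sum]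
    simp [hx c hc]

open Finset

section LinearCode

variable {R : Type*} [CommRing R] {N k : ℕ}

def HasMinDistAtLeast (C : Submodule R (Fin N → R)) (d : ℕ) : Prop :=
  ∀ c ∈ C, c ≠ 0 → d ≤ Set.ncard {i | c i ≠ 0}

def IsInformationSet (C : Submodule R (Fin N → R)) (s : Finset (Fin N)) : Prop :=
  Function.Bijective ((LinearMap.funLeft R R ((↑) : s → Fin N)).comp C.subtype)

theorem ncard_support_le_card {x : Fin N → R} {t : Finset (Fin N)} (ht : ∀ i ∉ t, x i = 0) :
    Set.ncard {i | x i ≠ 0} ≤ #t := by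
  rw [← Set.ncard_coe_finset t]
  exact Set.ncard_le_ncard (fun i hi => by_contra fun hit => hi (ht i hit)) t.finite_toSet

theorem HasMinDistAtLeast.eq_zero_of_support_subset {C : Submodule R (Fin N → R)} {d : ℕ}
    (hC : HasMinDistAtLeast C d) {c : Fin N → R} (hc : c ∈ C) {t : Finset (Fin N)}
    (ht : ∀ i ∉ t, c i = 0) (hcard : #t < d) : c = 0 := by
  by_contra hne
  have := hC c hc hne
  have := ncard_support_le_card ht
  omega

namespace IsInformationSet

variable {C : Submodule R (Fin N → R)} {s : Finset (Fin N)}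

theorem dualCode_eq_zero (hs : IsInformationSet C s) {x : Fin N → R} (hx : x ∈ dualCode R C)
    (hxs : ∀ i ∉ s, x i = 0) : x = 0 := by
  funext i
  by_cases hi : i ∈ s
  · obtain ⟨c, hc⟩ := hs.2 (Pi.single ⟨i, hi⟩ 1)
    have hcs : ∀ l : s, (c : Fin N → R) l = Pi.single (M := fun _ ↦ R) ⟨i, hi⟩ 1 l :=
      fun l => congrFun hc l
    calc x i = (fun l : s => x l) ⬝ᵥ Pi.single ⟨i, hi⟩ 1 := by simp
      _ = ∑ l : s, x l * (c : Fin N → R) l := by simp only [dotProduct, hcs]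
      _ = x ⬝ᵥ c := by
        rw [sum_coe_sort s (fun l => x l * (c : Fin N → R) l)]
        exact sum_subset (subset_univ s) fun l _ hl => by rw [hxs l hl, zero_mul]
      _ = 0 := hx c c.2
  · exact hxs i hi

section Systematic

variable (hs : IsInformationSet C s)

noncomputable def equiv : C ≃ₗ[R] (s → R) :=
  LinearEquiv.ofBijective _ hs

theorem apply_eq_sum {c : Fin N → R} (hc : c ∈ C) (j : Fin N) :
    c j = ∑ i : s, c i * (hs.equiv.symm (Pi.single i 1) : Fin N → R) j := by
  have hexp : (⟨c, hc⟩ : C) = ∑ i : s, c i • hs.equiv.symm (Pi.single i 1) := by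
    apply hs.equiv.injective
    simp only [map_sum, map_smul, LinearEquiv.apply_symm_apply]
    exact pi_eq_sum_univ' (hs.equiv ⟨c, hc⟩)
  simpa [Finset.sum_apply] using congrArg (fun d : C => (d : Fin N → R) j) hexp

noncomputable def parityCheck (j : Fin N) : Fin N → R :=
  Pi.single j 1 -
    ∑ i : s, (hs.equiv.symm (Pi.single i 1) : Fin N → R) j • Pi.single (i : Fin N) 1

theorem parityCheck_mem_dualCode (j : Fin N) : hs.parityCheck j ∈ dualCode R C := by
  intro c hc
  change hs.parityCheck j ⬝ᵥ c = 0
  simp only [parityCheck, sub_dotProduct, sum_dotProduct, smul_dotProduct, single_dotProduct,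
    smul_eq_mul, one_mul]
  rw [hs.apply_eq_sum hc j, sub_eq_zero]
  exact sum_congr rfl fun i _ => mul_comm _ _

theorem parityCheck_apply_of_notMem (j : Fin N) {l : Fin N} (hl : l ∉ s) :
    hs.parityCheck j l = Pi.single (M := fun _ ↦ R) j 1 l := by
  have hne : ∀ i : s, (i : Fin N) ≠ l := fun i h => hl (h ▸ i.2)
  simp [parityCheck, Finset.sum_apply, Pi.single_apply, hne]

end Systematic

theorem bijective_restrict_compl_dualCode (hs : IsInformationSet C s) :
    Function.Bijective
      ((LinearMap.funLeft R R ((↑) : ↥sᶜ → Fin N)).comp (dualCode R C).subtype) := by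
  constructor
  · rw [← LinearMap.ker_eq_bot, LinearMap.ker_eq_bot']
    intro x hx
    exact Subtype.ext (hs.dualCode_eq_zero x.2 fun i hi => congrFun hx ⟨i, mem_compl.2 hi⟩)
  · intro v
    have hmem : ∑ j : ↥sᶜ, v j • hs.parityCheck j ∈ dualCode R C :=
      sum_mem fun j _ => Submodule.smul_mem _ _ (hs.parityCheck_mem_dualCode j)
    refine ⟨⟨_, hmem⟩, funext fun l => ?_⟩
    have hl : (l : Fin N) ∉ s := mem_compl.1 l.2
    simp only [LinearMap.comp_apply, Submodule.subtype_apply, LinearMap.funLeft_apply,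
      Finset.sum_apply, Pi.smul_apply, smul_eq_mul, hs.parityCheck_apply_of_notMem _ hl]
    have hoff : ∀ j : ↥sᶜ, j ≠ l → v j * Pi.single (M := fun _ ↦ R) (j : Fin N) 1 l = 0 :=
      fun j hj => by rw [Pi.single_eq_of_ne fun h => hj (Subtype.ext h.symm), mul_zero]
    rw [sum_eq_single l (fun j _ => hoff j) (by simp), Pi.single_eq_same, mul_one]

end IsInformationSet

section MDS

variable [Finite R] {C : Submodule R (Fin N → R)}

theorem isInformationSet_of_card_eq (b : Module.Basis (Fin k) R C)
    (hC : HasMinDistAtLeast C (N - k + 1)) {s : Finset (Fin N)} (hs : #s = k) :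
    IsInformationSet C s := by
  have : Finite C := Subtype.finite
  rw [IsInformationSet, Nat.bijective_iff_injective_and_card]
  constructor
  · rw [← LinearMap.ker_eq_bot, LinearMap.ker_eq_bot']
    intro c hc
    refine Subtype.ext (hC.eq_zero_of_support_subset c.2 (t := sᶜ) (fun i hi => ?_) ?_)
    · exact congrFun hc ⟨i, by simpa using hi⟩
    · rw [card_compl, Fintype.card_fin]
      omega
  · exact Nat.card_congr (b.equivFun.toEquiv.trans
      ((s.equivFinOfCardEq hs).symm.arrowCongr (Equiv.refl R)))

theorem hasMinDistAtLeast_dualCode (b : Module.Basis (Fin k) R C)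
    (hC : HasMinDistAtLeast C (N - k + 1)) (hkN : k ≤ N) :
    HasMinDistAtLeast (dualCode R C) (k + 1) := by
  classical
  intro x hx hne
  by_contra! hlt
  have hsupp : #{i | x i ≠ 0} ≤ k := by
    rw [← Set.ncard_coe_finset, coe_filter]
    simpa [Nat.lt_succ_iff] using hlt
  obtain ⟨s, hsupp_s, hs⟩ :=
    exists_superset_card_eq hsupp (by rwa [Fintype.card_fin])
  refine hne ((isInformationSet_of_card_eq b hC hs).dualCode_eq_zero hx fun i hi => ?_)
  by_contra hxi
  exact hi (hsupp_s (by simpa using hxi))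

theorem exists_basis_dualCode (b : Module.Basis (Fin k) R C)
    (hC : HasMinDistAtLeast C (N - k + 1)) (hkN : k ≤ N) :
    Nonempty (Module.Basis (Fin (N - k)) R (dualCode R C)) := by
  obtain ⟨s, -, hs⟩ := exists_subset_card_eq (s := (univ : Finset (Fin N))) (n := k)
    (by rwa [card_univ, Fintype.card_fin])
  have hcard : Fintype.card ↥sᶜ = N - k := by
    rw [Fintype.card_coe, card_compl, Fintype.card_fin, hs]
  let e := LinearEquiv.ofBijective _
    (isInformationSet_of_card_eq b hC hs).bijective_restrict_compl_dualCode
  exact ⟨((Pi.basisFun R ↥sᶜ).map e.symm).reindex (Fintype.equivFinOfCardEq hcard)⟩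

theorem exists_mem_dualCode_ncard_eq [Nontrivial R] (b : Module.Basis (Fin k) R C)
    (hC : HasMinDistAtLeast C (N - k + 1)) (hkN : k < N) :
    ∃ x ∈ dualCode R C, x ≠ 0 ∧ Set.ncard {i | x i ≠ 0} = k + 1 := by
  obtain ⟨s, -, hs⟩ := exists_subset_card_eq (s := (univ : Finset (Fin N))) (n := k)
    (by rw [card_univ, Fintype.card_fin]; omega)
  obtain ⟨j, hj⟩ : ∃ j, j ∉ s := by
    by_contra! h
    have := card_le_card (fun j _ => h j : univ ⊆ s)
    rw [card_univ, Fintype.card_fin] at this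
    omega
  have hI := isInformationSet_of_card_eq b hC hs
  have hx := hI.parityCheck_mem_dualCode j
  have hne : hI.parityCheck j ≠ 0 := fun h => by
    simpa [hI.parityCheck_apply_of_notMem j hj] using congrFun h j
  refine ⟨_, hx, hne, le_antisymm ?_ (hasMinDistAtLeast_dualCode b hC hkN.le _ hx hne)⟩
  calc Set.ncard {i | hI.parityCheck j i ≠ 0} ≤ #(insert j s) :=
        ncard_support_le_card fun i hi => by
          rw [mem_insert, not_or] at hi
          simp [hI.parityCheck_apply_of_notMem j hi.2, Ne.symm hi.1]
    _ ≤ k + 1 := hs ▸ card_insert_le j s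

end MDS

end LinearCode

theorem Polynomial.Monic.nontrivial_adjoinRoot {S : Type*} [CommRing S] [Nontrivial S]
    {f : Polynomial S} (hf : f.Monic) (hdeg : 0 < f.natDegree) : Nontrivial (AdjoinRoot f) := by
  refine Ideal.Quotient.nontrivial_iff.mpr fun htop => ?_
  rw [Ideal.span_singleton_eq_top, hf.isUnit_iff] at htop
  simp [htop] at hdeg

theorem dual_of_free_MDS_is_free_MDS_general (p n m : ℕ) (hp : p.Prime) (hn : 0 < n) (hm : 0 < m)
    (f : Polynomial (ZMod (p ^ n))) (hf : f.Monic) (hdeg : f.natDegree = m)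
    (N k : ℕ) (hkN : k < N)
    (C : Submodule (AdjoinRoot f) (Fin N → AdjoinRoot f))
    (b : Module.Basis (Fin k) (AdjoinRoot f) C)
    (hdist_lb : ∀ c ∈ C, c ≠ 0 → N - k + 1 ≤ Set.ncard {i | c i ≠ 0}) :
    Nonempty (Module.Basis (Fin (N - k)) (AdjoinRoot f) (dualCode (AdjoinRoot f) C)) ∧
    (∀ x ∈ dualCode (AdjoinRoot f) C, x ≠ 0 → k + 1 ≤ Set.ncard {i | x i ≠ 0}) ∧
    (∃ x ∈ dualCode (AdjoinRoot f) C, x ≠ 0 ∧ Set.ncard {i | x i ≠ 0} = k + 1) := by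
  have : NeZero (p ^ n) := ⟨pow_ne_zero n hp.ne_zero⟩
  have : Fact (1 < p ^ n) := ⟨Nat.one_lt_pow hn.ne' hp.one_lt⟩
  have := hf.finite_adjoinRoot
  have : Finite (AdjoinRoot f) := Module.finite_of_finite (ZMod (p ^ n))
  have := hf.nontrivial_adjoinRoot (hdeg ▸ hm)
  exact ⟨exists_basis_dualCode b hdist_lb hkN.le, hasMinDistAtLeast_dualCode b hdist_lb hkN.le,
    exists_mem_dualCode_ncard_eq b hdist_lb hkN⟩

/-- Over the Galois ring `S = GR(p^n, m)`, the Euclidean dual of a free MDS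
code `C ⊆ S^N` of rank `k` (with `0 < k < N`) is a free MDS code of rank `N - k`, i.e. it is
free of rank `N - k` and its minimum Hamming distance is `k + 1`. -/
theorem dual_of_free_MDS_is_free_MDS (p n m : ℕ) (hp : p.Prime) (hn : 0 < n) (hm : 0 < m)
    (f : Polynomial (ZMod (p ^ n))) (hf : f.Monic) (hdeg : f.natDegree = m)
    (hirr : Irreducible (f.map (ZMod.castHom (dvd_pow_self p hn.ne') (ZMod p))))
    (N k : ℕ) (hk0 : 0 < k) (hkN : k < N)
    (C : Submodule (AdjoinRoot f) (Fin N → AdjoinRoot f))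
    (b : Module.Basis (Fin k) (AdjoinRoot f) C)
    (hdist_lb : ∀ c ∈ C, c ≠ 0 → N - k + 1 ≤ Set.ncard {i | c i ≠ 0})
    (hdist_eq : ∃ c ∈ C, c ≠ 0 ∧ Set.ncard {i | c i ≠ 0} = N - k + 1) :
    Nonempty (Module.Basis (Fin (N - k)) (AdjoinRoot f) (dualCode (AdjoinRoot f) C)) ∧
    (∀ x ∈ dualCode (AdjoinRoot f) C, x ≠ 0 → k + 1 ≤ Set.ncard {i | x i ≠ 0}) ∧
    (∃ x ∈ dualCode (AdjoinRoot f) C, x ≠ 0 ∧ Set.ncard {i | x i ≠ 0} = k + 1) :=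
  dual_of_free_MDS_is_free_MDS_general p n m hp hn hm f hf hdeg N k hkN C b hdist_lb
end

section
/- Let p be a prime, n, m, l ≥ 1, R = GR(p^n,m) = (ZMod (p^n))[X]/(f) for a monic basic irreducible f of degree m, ρ ∈ R[X] monic of degree l with reduction modulo (p) irreducible over R/(p), and S = R[X]/(ρ). Then there exists β ∈ S with β^{p^{ml} − 1} = 1 such that the family (1, β, β², …, β^{l−1}) is a basis of S as a free R-module; in particular, an R-basis of S can be chosen inside the Teichmüller set of S. -/
/-!
The residue ring `S/(p)` is the field with `q = p^(ml)` elements and `(p)` is nilpotent. Since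
`a ≡ b mod p` implies `a^(p^k) ≡ b^(p^k) mod p^(k+1)`, the Teichmüller lift `β = x^(q^n)` of the
root `x` of `ρ` satisfies `β^q = β` and `β ≡ x mod p`. For `l ≥ 2` the root is nonzero modulo `p`,
so `β` is a unit and `β^(q-1) = 1`. The powers of `β` agree with those of `x` modulo `p`, hence span
`S` by Nakayama, and `l` spanning vectors of a free module of rank `l` form a basis. For `l ≤ 1`
take `β = 1`.
-/

open Polynomial

theorem Polynomial.irreducible_map_iff_irreducible_map_quotient_mk_ker {A B : Type*} [CommRing A]
    [CommRing B] {φ : A →+* B} (hφ : Function.Surjective φ) (g : A[X]) :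
    Irreducible (g.map φ) ↔ Irreducible (g.map (Ideal.Quotient.mk (RingHom.ker φ))) := by
  let e := RingHom.quotientKerEquivOfSurjective hφ
  have hg : g.map φ = mapEquiv e (g.map (Ideal.Quotient.mk _)) := by
    rw [mapEquiv_apply, Polynomial.map_map]
    congr 1
  rw [hg, MulEquiv.irreducible_iff]

theorem isUnit_of_isUnit_map_of_isNilpotent_ker {S T : Type*} [CommRing S] [CommRing T]
    {π : S →+* T} (hπ : Function.Surjective π) (hker : IsNilpotent (RingHom.ker π)) {a : S}
    (ha : IsUnit (π a)) : IsUnit a := by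
  refine (IsNilpotent.isUnit_quotient_mk_iff hker).mp ?_
  rw [← isUnit_map_iff (RingHom.quotientKerEquivOfSurjective hπ),
    RingHom.quotientKerEquivOfSurjective_apply_mk]
  exact ha

theorem Module.Basis.exists_basis_of_sub_mem_smul_top {R M ι : Type*} [CommRing R]
    [AddCommGroup M] [Module R M] [Finite ι] (b : Basis ι R M) {I : Ideal R}
    (hI : I ≤ Ideal.jacobson ⊥) (v : ι → M) (hv : ∀ i, b i - v i ∈ I • (⊤ : Submodule R M)) :
    ∃ b' : Basis ι R M, ⇑b' = v := by
  have : Module.Finite R M := Module.Finite.of_basis b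
  have hspan : Submodule.span R (Set.range v) = ⊤ := by
    refine top_le_iff.mp (Submodule.le_of_le_smul_of_le_jacobson_bot Module.Finite.fg_top hI ?_)
    conv_lhs => rw [← b.span_eq]
    rw [Submodule.span_le]
    rintro _ ⟨i, rfl⟩
    rw [SetLike.mem_coe, ← add_sub_cancel (v i) (b i)]
    exact Submodule.add_mem_sup (Submodule.subset_span ⟨i, rfl⟩) (hv i)
  let φ := b.constr ℕ v
  have hφ : Function.Surjective φ := by
    rw [← LinearMap.range_eq_top, b.constr_range, hspan]
  let e := LinearEquiv.ofBijective φ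
    ⟨OrzechProperty.injective_of_surjective_endomorphism φ hφ, hφ⟩
  exact ⟨b.map e, funext fun i => b.constr_basis ℕ v i⟩

section Teichmuller

variable {S : Type*} [CommRing S]

theorem pow_prime_pow_eq_of_dvd_sub {p n k : ℕ} (hpn : (p : S) ^ n = 0) (hk : n ≤ k + 1)
    {a b : S} (h : (p : S) ∣ a - b) : a ^ p ^ k = b ^ p ^ k := by
  have := dvd_sub_pow_of_dvd_sub h k
  rwa [pow_eq_zero_of_le hk hpn, zero_dvd_iff, sub_eq_zero] at this

theorem pow_pow_pow_eq_self_of_dvd {p n e : ℕ} (he : 0 < e) (hpn : (p : S) ^ n = 0) {x : S}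
    (hx : (p : S) ∣ x ^ p ^ e - x) : (x ^ (p ^ e) ^ n) ^ p ^ e = x ^ (p ^ e) ^ n := by
  have hk : n ≤ e * n + 1 := (Nat.le_mul_of_pos_left n he).trans (Nat.le_succ _)
  calc (x ^ (p ^ e) ^ n) ^ p ^ e = (x ^ p ^ e) ^ p ^ (e * n) := by
        rw [← pow_mul p e n, ← pow_mul, ← pow_mul, mul_comm]
    _ = x ^ (p ^ e) ^ n := by rw [pow_prime_pow_eq_of_dvd_sub hpn hk hx, pow_mul]

theorem dvd_pow_pow_sub_self {c : S} {q : ℕ} (hfrob : ∀ y : S, c ∣ y ^ q - y) (x : S) (j : ℕ) :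
    c ∣ x ^ q ^ j - x := by
  induction j with
  | zero => simp
  | succ j ih =>
    have : x ^ q ^ (j + 1) - x = ((x ^ q ^ j) ^ q - x ^ q ^ j) + (x ^ q ^ j - x) := by
      rw [← pow_mul, ← pow_succ]; ring
    rw [this]
    exact dvd_add (hfrob _) ih

end Teichmuller

theorem exists_teichmuller_basis_of_residue {R S K : Type*} [CommRing R] [CommRing S]
    [Algebra R S] [Field K] [Finite K] {p n e l : ℕ} (hpR : (p : R) ^ n = 0) {π : S →+* K}
    (hπ : Function.Surjective π) (hker : RingHom.ker π = Ideal.span {(p : S)})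
    (hcard : Nat.card K = p ^ e) (b : Module.Basis (Fin l) R S) (x : S)
    (hb : ∀ i, b i = x ^ (i : ℕ)) (hx : π x ≠ 0) :
    ∃ β : S, β ^ (p ^ e - 1) = 1 ∧ ∃ b' : Module.Basis (Fin l) R S, ∀ i, b' i = β ^ (i : ℕ) := by
  have := Fintype.ofFinite K
  have hpS : (p : S) ^ n = 0 := by
    rw [← map_natCast (algebraMap R S), ← map_pow, hpR, map_zero]
  have he : 0 < e := Nat.pos_of_ne_zero fun he =>
    (Finite.one_lt_card (α := K)).ne' (by rw [hcard, he, pow_zero])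
  have hmem : ∀ y : S, (p : S) ∣ y ↔ π y = 0 := fun y => by
    rw [← RingHom.mem_ker, hker, Ideal.mem_span_singleton]
  have hfrob : ∀ y : S, (p : S) ∣ y ^ p ^ e - y := fun y => by
    rw [hmem, map_sub, map_pow, ← hcard, Nat.card_eq_fintype_card, FiniteField.pow_card, sub_self]
  set β := x ^ (p ^ e) ^ n
  have hβ : β ^ p ^ e = β := pow_pow_pow_eq_self_of_dvd he hpS (hfrob x)
  have hβx : (p : S) ∣ β - x := dvd_pow_pow_sub_self hfrob x n
  have hβunit : IsUnit β := by
    have hπβ := (hmem _).mp hβx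
    rw [map_sub, sub_eq_zero] at hπβ
    refine isUnit_of_isUnit_map_of_isNilpotent_ker hπ ⟨n, ?_⟩ (hπβ ▸ hx).isUnit
    rw [hker, Ideal.span_singleton_pow, hpS, Ideal.span_singleton_eq_bot.mpr rfl, Ideal.zero_eq_bot]
  have hI : Ideal.span {(p : R)} ≤ Ideal.jacobson ⊥ := (Ideal.span_singleton_le_iff_mem _).mpr
    (Ideal.radical_le_jacobson (mem_nilradical.mpr ⟨n, hpR⟩))
  obtain ⟨b', hb'⟩ := b.exists_basis_of_sub_mem_smul_top hI (fun i => β ^ (i : ℕ)) fun i => by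
    obtain ⟨t, ht⟩ := (dvd_sub_comm.mp hβx).trans (sub_dvd_pow_sub_pow x β i)
    rw [hb, ht, ← map_natCast (algebraMap R S), ← Algebra.smul_def]
    exact Submodule.smul_mem_smul (Ideal.mem_span_singleton_self _) Submodule.mem_top
  refine ⟨β, hβunit.mul_left_cancel ?_, b', fun i => by rw [hb']⟩
  rw [← pow_succ', Nat.sub_add_cancel (hcard ▸ Nat.card_pos), hβ, mul_one]

namespace AdjoinRoot

variable {A B : Type*} [CommRing A] [CommRing B]

theorem map_mk_s15 (φ : A →+* B) (g : A[X]) (h : B[X]) (hdvd : h ∣ g.map φ) (q : A[X]) :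
    map φ g h hdvd (mk g q) = mk h (q.map φ) := by
  have : (map φ g h hdvd).comp (mk g) = (mk h).comp (mapRingHom φ) :=
    Polynomial.ringHom_ext (fun a => by simp [mk_C]) (by simp [mk_X])
  exact DFunLike.congr_fun this q

theorem finite_of_monic [Finite A] {g : A[X]} (hg : g.Monic) : Finite (AdjoinRoot g) :=
  have := Module.Finite.of_basis (powerBasis' hg).basis
  Module.finite_of_finite A

theorem natCard_eq_pow_natDegree {K : Type*} [Field K] {g : K[X]} (hg : g.Monic) :
    Nat.card (AdjoinRoot g) = Nat.card K ^ g.natDegree := by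
  have := Module.Finite.of_basis (powerBasis' hg).basis
  rw [Module.natCard_eq_pow_finrank (K := K), (powerBasis' hg).finrank, powerBasis'_dim]

theorem root_ne_zero_of_two_le_natDegree [IsDomain A] {g : A[X]} (hg : 2 ≤ g.natDegree) :
    root g ≠ 0 := by
  rw [← mk_X, Ne, mk_eq_zero]
  intro hdvd
  have := natDegree_le_of_dvd hdvd X_ne_zero
  rw [natDegree_X] at this
  omega

section Residue

variable {φ : A →+* B} (hφ : Function.Surjective φ) (g : A[X])
include hφ

theorem map_surjective_of_surjective : Function.Surjective (map φ g (g.map φ) dvd_rfl) := by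
  intro y
  obtain ⟨r, rfl⟩ := mk_surjective y
  obtain ⟨q, rfl⟩ := Polynomial.map_surjective φ hφ r
  exact ⟨mk g q, map_mk_s15 ..⟩

theorem ker_map_of_surjective :
    RingHom.ker (map φ g (g.map φ) dvd_rfl) = (RingHom.ker φ).map (of g) := by
  refine le_antisymm (fun y hy => ?_)
    (Ideal.map_le_iff_le_comap.mpr fun a ha => by simp [RingHom.mem_ker.mp ha])
  obtain ⟨q, rfl⟩ := mk_surjective y
  rw [RingHom.mem_ker, map_mk_s15, mk_eq_zero] at hy
  obtain ⟨r', hr'⟩ := hy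
  obtain ⟨r, rfl⟩ := Polynomial.map_surjective φ hφ r'
  have hmem : q - g * r ∈ (RingHom.ker φ).map C := by
    rw [← ker_mapRingHom, RingHom.mem_ker, coe_mapRingHom, Polynomial.map_sub,
      Polynomial.map_mul, hr', sub_self]
  have hq : mk g q = mk g (q - g * r) := by rw [map_sub, map_mul, mk_self, zero_mul, sub_zero]
  rw [hq, of, ← Ideal.map_map]
  exact Ideal.mem_map_of_mem _ hmem

theorem ker_map_eq_span_natCast {p : ℕ} (hker : RingHom.ker φ = Ideal.span {(p : A)}) :
    RingHom.ker (map φ g (g.map φ) dvd_rfl) = Ideal.span {(p : AdjoinRoot g)} := by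
  rw [ker_map_of_surjective hφ, hker, Ideal.map_span, Set.image_singleton, map_natCast]

end Residue

theorem exists_teichmuller_basis {k : Type*} [Field k] [Finite k] {p n e : ℕ}
    (hpA : (p : A) ^ n = 0) {π : A →+* k} (hπ : Function.Surjective π)
    (hker : RingHom.ker π = Ideal.span {(p : A)}) (hcard : Nat.card k = p ^ e) {ρ : A[X]}
    (hρ : ρ.Monic) (hirr : Irreducible (ρ.map π)) :
    ∃ β : AdjoinRoot ρ, β ^ (p ^ (e * ρ.natDegree) - 1) = 1 ∧
      ∃ b : Module.Basis (Fin ρ.natDegree) A (AdjoinRoot ρ), ∀ i, b i = β ^ (i : ℕ) := by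
  let b := (powerBasis' hρ).basis.reindex (finCongr (powerBasis'_dim hρ))
  have hb : ∀ i, b i = root ρ ^ (i : ℕ) := fun i => by
    simp [b, powerBasis'_gen]
  rcases lt_or_ge ρ.natDegree 2 with hdeg | hdeg
  · exact ⟨1, one_pow _, b, fun i => by rw [hb, one_pow, show (i : ℕ) = 0 by omega, pow_zero]⟩
  have : Fact (Irreducible (ρ.map π)) := ⟨hirr⟩
  have := finite_of_monic (hρ.map π)
  have hcardK : Nat.card (AdjoinRoot (ρ.map π)) = p ^ (e * ρ.natDegree) := by
    rw [natCard_eq_pow_natDegree (hρ.map π), hcard, hρ.natDegree_map, pow_mul]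
  have hroot : map π ρ _ dvd_rfl (root ρ) ≠ 0 := by
    rw [map_root]
    exact root_ne_zero_of_two_le_natDegree (by rwa [hρ.natDegree_map])
  exact exists_teichmuller_basis_of_residue hpA
    (map_surjective_of_surjective hπ ρ) (ker_map_eq_span_natCast hπ ρ hker) hcardK b _ hb hroot

end AdjoinRoot

theorem galois_ring_teichmuller_basis_general (p n m l : ℕ) (hp : p.Prime)
    (hn : 0 < n)
    (f : Polynomial (ZMod (p ^ n))) (hf : f.Monic) (hdeg : f.natDegree = m)
    (hirr : Irreducible (f.map (ZMod.castHom (dvd_pow_self p hn.ne') (ZMod p))))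
    (ρ : Polynomial (AdjoinRoot f)) (hρ : ρ.Monic) (hρdeg : ρ.natDegree = l)
    (hρirr : Irreducible
      (ρ.map (Ideal.Quotient.mk (Ideal.span {(p : AdjoinRoot f)})))) :
    ∃ β : AdjoinRoot ρ, β ^ (p ^ (m * l) - 1) = 1 ∧
      ∃ b : Module.Basis (Fin l) (AdjoinRoot f) (AdjoinRoot ρ), ∀ i : Fin l, b i = β ^ (i : ℕ) := by
  subst hdeg hρdeg
  have : Fact p.Prime := ⟨hp⟩
  have : Fact (Irreducible _) := ⟨hirr⟩
  have hcast := ZMod.castHom_surjective (dvd_pow_self p hn.ne')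
  have := AdjoinRoot.finite_of_monic (hf.map (ZMod.castHom (dvd_pow_self p hn.ne') (ZMod p)))
  have hπ := AdjoinRoot.map_surjective_of_surjective hcast f
  have hker := AdjoinRoot.ker_map_eq_span_natCast hcast f (ZMod.ker_castHom _)
  have hcard := AdjoinRoot.natCard_eq_pow_natDegree
    (hf.map (ZMod.castHom (dvd_pow_self p hn.ne') (ZMod p)))
  rw [Nat.card_zmod, hf.natDegree_map] at hcard
  have hpR : (p : AdjoinRoot f) ^ n = 0 := by
    rw [← Nat.cast_pow, ← map_natCast (algebraMap (ZMod (p ^ n)) (AdjoinRoot f)),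
      ZMod.natCast_self, map_zero]
  refine AdjoinRoot.exists_teichmuller_basis hpR hπ hker hcard hρ ?_
  rwa [irreducible_map_iff_irreducible_map_quotient_mk_ker hπ, hker]

/-- Let `R = GR(p^n, m)` and `S = R[X]/(ρ) = GR(p^n, m*l)` for a monic
`ρ` of degree `l` whose reduction mod `(p)` is irreducible over `R/(p)`. Then there is a
`β ∈ S` with `β ^ (p^(m*l) - 1) = 1` (a nonzero Teichmüller element) such that
`(1, β, β², …, β^(l-1))` is an `R`-basis of `S`. -/
theorem galois_ring_teichmuller_basis (p n m l : ℕ) (hp : p.Prime)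
    (hn : 0 < n) (hm : 0 < m) (hl : 0 < l)
    (f : Polynomial (ZMod (p ^ n))) (hf : f.Monic) (hdeg : f.natDegree = m)
    (hirr : Irreducible (f.map (ZMod.castHom (dvd_pow_self p hn.ne') (ZMod p))))
    (ρ : Polynomial (AdjoinRoot f)) (hρ : ρ.Monic) (hρdeg : ρ.natDegree = l)
    (hρirr : Irreducible
      (ρ.map (Ideal.Quotient.mk (Ideal.span {(p : AdjoinRoot f)})))) :
    ∃ β : AdjoinRoot ρ, β ^ (p ^ (m * l) - 1) = 1 ∧
      ∃ b : Module.Basis (Fin l) (AdjoinRoot f) (AdjoinRoot ρ), ∀ i : Fin l, b i = β ^ (i : ℕ) :=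
  galois_ring_teichmuller_basis_general p n m l hp hn f hf hdeg hirr ρ hρ hρdeg hρirr
end
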